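/- Let G = C_3 be a cyclic group of order 3. The set of tame degrees of the monoid of zero-sum sequences B(C_3) is Ta(C_3) = {3}. -/

import Mathlib

/-- A minimal zero-sum sequence over the abelian group `G`: a nonempty zero-sum
multiset none of whose proper nonempty sub-multisets has sum zero. -/
def IsMinZeroSum {G : Type*} [AddCommGroup G] (S : Multiset G) : Prop :=
  S ≠ 0 ∧ S.sum = 0 ∧ ∀ T ≤ S, T ≠ 0 → T.sum = 0 → T = S

/-- A factorization of a zero-sum sequence `B` into atoms of `B(G)`. -/
def IsFactorization {G : Type*} [AddCommGroup G] (B : Multiset G)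
    (z : Multiset (Multiset G)) : Prop :=
  (∀ A ∈ z, IsMinZeroSum A) ∧ z.sum = B

/-- The usual distance between two factorizations. -/
noncomputable def factDist {G : Type*} [AddCommGroup G] (z z' : Multiset (Multiset G)) : ℕ :=
  letI := Classical.decEq (Multiset G)
  max (z - z').card (z' - z).card

/-- The catenary degree of `B ∈ B(G)`: the least `N` such that any two factorizations
of `B` can be concatenated by a chain of factorizations with consecutive distances `≤ N`. -/
noncomputable def catenaryDeg {G : Type*} [AddCommGroup G] (B : Multiset G) : ℕ :=
  sInf {N : ℕ | ∀ z z', IsFactorization B z → IsFactorization B z' →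
    Relation.ReflTransGen (fun x y => IsFactorization B y ∧ factDist x y ≤ N) z z'}

/-- The tame degree `t(A, U)` of `A ∈ B(G)` with respect to the atom `U`. -/
noncomputable def tameDeg {G : Type*} [AddCommGroup G] (A U : Multiset G) : ℕ :=
  sInf {N : ℕ | ∀ z, IsFactorization A z →
    (∃ z', IsFactorization A z' ∧ U ∈ z') →
    ∃ z', IsFactorization A z' ∧ U ∈ z' ∧ factDist z z' ≤ N}

/-- The set of (positive) tame degrees of `B(G)`. -/
noncomputable def TaSet (G : Type*) [AddCommGroup G] : Set ℕ :=
  {n | 0 < n ∧ ∃ A U : Multiset G, A.sum = 0 ∧ IsMinZeroSum U ∧ tameDeg A U = n}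

/-- The Davenport constant of `G`: the supremum of lengths of minimal zero-sum sequences. -/
noncomputable def davenport (G : Type*) [AddCommGroup G] : ℕ :=
  sSup {n : ℕ | ∃ A : Multiset G, IsMinZeroSum A ∧ A.card = n}

/-!
The atoms of `B(C₃)` are `0`, `1³`, `2³` and `1·2`, and a factorization of `A` is pinned down
by how many atoms of each kind it uses: counting the elements `0`, `1`, `2` of `A` gives three
linear equations, whose solutions differ by multiples of the single relation
`(1³)(2³) = (1·2)³`. So if an atom `U` occurs in some but not all factorizations of `A`, one
exchange `(1·2)³ ↔ (1³)(2³)` turns a factorization avoiding `U` into one containing `U`, at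
distance `3`, and no factorization containing `U` is closer: the relation changes the
multiplicity of `1·2` by a multiple of `3`. If `U` occurs in all or in none of them, the tame
degree is `0`.
-/

section General

variable {G : Type*} [AddCommGroup G]

theorem isMinZeroSum_iff_forall_mem_powerset {S : Multiset G} :
    IsMinZeroSum S ↔ S ≠ 0 ∧ S.sum = 0 ∧ ∀ T ∈ S.powerset, T ≠ 0 → T.sum = 0 → T = S := by
  simp only [IsMinZeroSum, Multiset.mem_powerset]

theorem factDist_eq [DecidableEq (Multiset G)] (z z' : Multiset (Multiset G)) :
    factDist z z' = max (z - z').card (z' - z).card := by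
  unfold factDist
  congr <;> exact Subsingleton.elim _ _

@[simp]
theorem factDist_self (z : Multiset (Multiset G)) : factDist z z = 0 := by
  classical
  simp [factDist_eq]

theorem factDist_sub_add_le [DecidableEq (Multiset G)] {z P Q : Multiset (Multiset G)}
    (hP : P ≤ z) : factDist z (z - P + Q) ≤ max P.card Q.card := by
  rw [factDist_eq]
  refine max_le_max (Multiset.card_le_card ?_) (Multiset.card_le_card ?_)
  · calc z - (z - P + Q) ≤ z - (z - P) := tsub_le_tsub_left le_self_add z
      _ = P := tsub_tsub_cancel_of_le hP
  · exact tsub_le_iff_left.2 (add_le_add_left (Multiset.sub_le_self z P) Q)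

theorem IsFactorization.sub_add [DecidableEq (Multiset G)] {A B : Multiset G}
    {z P Q : Multiset (Multiset G)} (hz : IsFactorization A z) (hP : IsFactorization B P)
    (hQ : IsFactorization B Q) (hPz : P ≤ z) : IsFactorization A (z - P + Q) := by
  refine ⟨fun V hV => ?_, ?_⟩
  · rcases Multiset.mem_add.1 hV with hV | hV
    exacts [hz.1 V (Multiset.mem_of_le (Multiset.sub_le_self z P) hV), hQ.1 V hV]
  · rw [Multiset.sum_add, hQ.2, ← hP.2, ← Multiset.sum_add, tsub_add_cancel_of_le hPz, hz.2]

theorem tameDeg_eq_zero {A U : Multiset G}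
    (h : ∀ z, IsFactorization A z → (∃ z', IsFactorization A z' ∧ U ∈ z') → U ∈ z) :
    tameDeg A U = 0 :=
  Nat.sInf_eq_zero.2 <| .inl fun z hz hU => ⟨z, hz, h z hz hU, (factDist_self z).le⟩

theorem tameDeg_eq_of_bounds {A U : Multiset G} {N : ℕ} {z₀ : Multiset (Multiset G)}
    (hupper : ∀ z, IsFactorization A z → U ∉ z → (∃ z', IsFactorization A z' ∧ U ∈ z') →
      ∃ z', IsFactorization A z' ∧ U ∈ z' ∧ factDist z z' ≤ N)
    (hz₀ : IsFactorization A z₀) (hU : ∃ z', IsFactorization A z' ∧ U ∈ z')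
    (hlower : ∀ z', IsFactorization A z' → U ∈ z' → N ≤ factDist z₀ z') :
    tameDeg A U = N := by
  have hN : N ∈ {N : ℕ | ∀ z, IsFactorization A z → (∃ z', IsFactorization A z' ∧ U ∈ z') →
      ∃ z', IsFactorization A z' ∧ U ∈ z' ∧ factDist z z' ≤ N} := fun z hz hU => by
    by_cases hUz : U ∈ z
    · exact ⟨z, hz, hUz, by simp⟩
    · exact hupper z hz hUz hU
  refine le_antisymm (Nat.sInf_le hN) (le_csInf ⟨N, hN⟩ fun M hM => ?_)
  obtain ⟨z', hz', hUz', hM⟩ := hM z₀ hz₀ hU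
  exact (hlower z' hz' hUz').trans hM

end General

theorem ZMod.replicate_le_of_sum_replicate_eq_zero {p : ℕ} [Fact p.Prime] {g : ZMod p}
    (hg : g ≠ 0) {n : ℕ} (hn : n ≠ 0) (hsum : (Multiset.replicate n g).sum = 0) :
    Multiset.replicate p g ≤ Multiset.replicate n g := by
  rw [Multiset.sum_replicate, nsmul_eq_mul, mul_eq_zero, or_iff_left hg,
    ZMod.natCast_eq_zero_iff] at hsum
  exact (Multiset.replicate_le_replicate g).2 (Nat.le_of_dvd (Nat.pos_of_ne_zero hn) hsum)

namespace ZMod3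

abbrev atom0 : Multiset (ZMod 3) := {0}
abbrev atom111 : Multiset (ZMod 3) := Multiset.replicate 3 1
abbrev atom222 : Multiset (ZMod 3) := Multiset.replicate 3 2
abbrev atom12 : Multiset (ZMod 3) := {1, 2}

theorem isMinZeroSum_atom0 : IsMinZeroSum atom0 := by
  rw [isMinZeroSum_iff_forall_mem_powerset]; decide
theorem isMinZeroSum_atom111 : IsMinZeroSum atom111 := by
  rw [isMinZeroSum_iff_forall_mem_powerset]; decide
theorem isMinZeroSum_atom222 : IsMinZeroSum atom222 := by
  rw [isMinZeroSum_iff_forall_mem_powerset]; decide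
theorem isMinZeroSum_atom12 : IsMinZeroSum atom12 := by
  rw [isMinZeroSum_iff_forall_mem_powerset]; decide

theorem eq_zero_or_eq_one_or_eq_two (g : ZMod 3) : g = 0 ∨ g = 1 ∨ g = 2 := by
  revert g; decide

theorem exists_atom_le {S : Multiset (ZMod 3)} (hS : S ≠ 0) (hsum : S.sum = 0) :
    ∃ V, (V = atom0 ∨ V = atom111 ∨ V = atom222 ∨ V = atom12) ∧ V ≤ S := by
  by_cases h0 : (0 : ZMod 3) ∈ S
  · exact ⟨_, .inl rfl, Multiset.singleton_le.2 h0⟩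
  by_cases h12 : (1 : ZMod 3) ∈ S ∧ (2 : ZMod 3) ∈ S
  · refine ⟨_, .inr (.inr (.inr rfl)), (Multiset.le_iff_subset (by decide)).2 ?_⟩
    simpa [Multiset.cons_subset] using h12
  obtain ⟨g, hg⟩ := Multiset.exists_mem_of_ne_zero hS
  have hrep : S = Multiset.replicate S.card g := Multiset.eq_replicate_card.2 fun b hb => by
    obtain rfl | rfl | rfl := eq_zero_or_eq_one_or_eq_two b <;>
      obtain rfl | rfl | rfl := eq_zero_or_eq_one_or_eq_two g <;> simp_all
  have hle := ZMod.replicate_le_of_sum_replicate_eq_zero (ne_of_mem_of_not_mem hg h0)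
    (by simpa using hS) (hrep ▸ hsum)
  rw [← hrep] at hle
  obtain rfl | rfl | rfl := eq_zero_or_eq_one_or_eq_two g
  exacts [absurd hg h0, ⟨_, .inr (.inl rfl), hle⟩, ⟨_, .inr (.inr (.inl rfl)), hle⟩]

theorem eq_atom_of_isMinZeroSum {U : Multiset (ZMod 3)} (hU : IsMinZeroSum U) :
    U = atom0 ∨ U = atom111 ∨ U = atom222 ∨ U = atom12 := by
  obtain ⟨V, hV, hVU⟩ := exists_atom_le hU.1 hU.2.1
  have hVatom : IsMinZeroSum V := by
    rcases hV with rfl | rfl | rfl | rfl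
    exacts [isMinZeroSum_atom0, isMinZeroSum_atom111, isMinZeroSum_atom222, isMinZeroSum_atom12]
  rwa [← hU.2.2 V hVU hVatom.1 hVatom.2.1]

theorem count_sum_of_forall_isMinZeroSum {z : Multiset (Multiset (ZMod 3))}
    (hz : ∀ V ∈ z, IsMinZeroSum V) :
    z.sum.count 0 = z.count atom0 ∧
    z.sum.count 1 = 3 * z.count atom111 + z.count atom12 ∧
    z.sum.count 2 = 3 * z.count atom222 + z.count atom12 := by
  induction z using Multiset.induction_on with
  | empty => simp
  | cons V z ih =>
    obtain ⟨ih0, ih1, ih2⟩ := ih fun W hW => hz W (Multiset.mem_cons_of_mem hW)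
    rcases eq_atom_of_isMinZeroSum (hz V (Multiset.mem_cons_self V z)) with rfl | rfl | rfl | rfl
    all_goals simp +decide [ih0, ih1, ih2] <;> omega

theorem isFactorization_pair : IsFactorization (atom111 + atom222) {atom111, atom222} :=
  ⟨by simpa using ⟨isMinZeroSum_atom111, isMinZeroSum_atom222⟩, by decide⟩

theorem isFactorization_triple :
    IsFactorization (atom111 + atom222) (Multiset.replicate 3 atom12) :=
  ⟨fun V hV => Multiset.eq_of_mem_replicate hV ▸ isMinZeroSum_atom12, by decide⟩

theorem count_eq_of_isFactorization {A : Multiset (ZMod 3)} {z : Multiset (Multiset (ZMod 3))}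
    (hz : IsFactorization A z) :
    A.count 0 = z.count atom0 ∧
    A.count 1 = 3 * z.count atom111 + z.count atom12 ∧
    A.count 2 = 3 * z.count atom222 + z.count atom12 :=
  hz.2 ▸ count_sum_of_forall_isMinZeroSum hz.1

theorem three_le_factDist {A U : Multiset (ZMod 3)} {z z' : Multiset (Multiset (ZMod 3))}
    (hU : IsMinZeroSum U) (hz : IsFactorization A z) (hUz : U ∉ z)
    (hz' : IsFactorization A z') (hUz' : U ∈ z') : 3 ≤ factDist z z' := by
  obtain ⟨h0, h1, h2⟩ := count_eq_of_isFactorization hz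
  obtain ⟨h0', h1', h2'⟩ := count_eq_of_isFactorization hz'
  rw [← Multiset.count_eq_zero] at hUz
  rw [← Multiset.count_pos] at hUz'
  have hcount : 3 ≤ (z - z').count atom12 ∨ 3 ≤ (z' - z).count atom12 := by
    simp only [Multiset.count_sub]
    rcases eq_atom_of_isMinZeroSum hU with rfl | rfl | rfl | rfl <;> omega
  rw [factDist_eq]
  rcases hcount with h | h
  exacts [le_max_of_le_left (h.trans (Multiset.count_le_card _ _)),
    le_max_of_le_right (h.trans (Multiset.count_le_card _ _))]

theorem exists_factorization_mem_factDist_le_three {A U : Multiset (ZMod 3)}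
    {z z' : Multiset (Multiset (ZMod 3))} (hU : IsMinZeroSum U) (hz : IsFactorization A z)
    (hUz : U ∉ z) (hz' : IsFactorization A z') (hUz' : U ∈ z') :
    ∃ w, IsFactorization A w ∧ U ∈ w ∧ factDist z w ≤ 3 := by
  obtain ⟨h0, h1, h2⟩ := count_eq_of_isFactorization hz
  obtain ⟨h0', h1', h2'⟩ := count_eq_of_isFactorization hz'
  rw [← Multiset.count_eq_zero] at hUz
  rw [← Multiset.count_pos] at hUz'
  have hexchange (h : 3 ≤ z.count atom12) :
      IsFactorization A (z - Multiset.replicate 3 atom12 + {atom111, atom222}) ∧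
      factDist z (z - Multiset.replicate 3 atom12 + {atom111, atom222}) ≤ 3 :=
    have hle := Multiset.le_count_iff_replicate_le.1 h
    ⟨hz.sub_add isFactorization_triple isFactorization_pair hle,
      (factDist_sub_add_le hle).trans (by simp)⟩
  rcases eq_atom_of_isMinZeroSum hU with rfl | rfl | rfl | rfl
  · omega
  · exact ⟨_, (hexchange (by omega)).1, by simp, (hexchange (by omega)).2⟩
  · exact ⟨_, (hexchange (by omega)).1, by simp, (hexchange (by omega)).2⟩
  · have hle : ({atom111, atom222} : Multiset (Multiset (ZMod 3))) ≤ z := by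
      refine (Multiset.le_iff_subset (by decide)).2 ?_
      simp only [Multiset.insert_eq_cons, Multiset.cons_subset, Multiset.singleton_subset,
        ← Multiset.count_pos]
      omega
    exact ⟨_, hz.sub_add isFactorization_pair isFactorization_triple hle, by simp,
      (factDist_sub_add_le hle).trans (by simp)⟩

theorem tameDeg_eq_three {A U : Multiset (ZMod 3)} {z₀ : Multiset (Multiset (ZMod 3))}
    (hU : IsMinZeroSum U) (hz₀ : IsFactorization A z₀) (hUz₀ : U ∉ z₀)
    (hA : ∃ z, IsFactorization A z ∧ U ∈ z) : tameDeg A U = 3 :=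
  tameDeg_eq_of_bounds
    (fun _ hz hUz ⟨_, hz', hUz'⟩ => exists_factorization_mem_factDist_le_three hU hz hUz hz' hUz')
    hz₀ hA fun _ hz' hUz' => three_le_factDist hU hz₀ hUz₀ hz' hUz'

end ZMod3

theorem stmt11 : TaSet (ZMod 3) = {3} := by
  ext n
  constructor
  · rintro ⟨hn, A, U, -, hU, rfl⟩
    obtain ⟨z, hz, hA, hUz⟩ :
        ∃ z, IsFactorization A z ∧ (∃ z', IsFactorization A z' ∧ U ∈ z') ∧ U ∉ z := by
      by_contra! h
      exact hn.ne' (tameDeg_eq_zero h)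
    exact ZMod3.tameDeg_eq_three hU hz hUz hA
  · rintro rfl
    refine ⟨three_pos, _, _, by decide, ZMod3.isMinZeroSum_atom111,
      ZMod3.tameDeg_eq_three ZMod3.isMinZeroSum_atom111 ZMod3.isFactorization_triple (by decide)
        ⟨_, ZMod3.isFactorization_pair, by simp⟩⟩
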